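/- Let G be a finite abelian group, let S ⊆ G, and let x ∈ S. Then |Σ(S)| ≥ |Σ(S \ {x})| + λ_B(x), where B = Σ(S). -/

import Mathlib

/-!
Write `A = Σ(S \ {x})` and `B = Σ(S)`. Splitting subsets by whether they contain `x` gives
`B = A ∪ (A + x)`, so `|B| = |A| + λ_A(x)`. Moreover `(B + x) \ B ⊆ (A + 2x) \ (A + x)`, a
translate of `(A + x) \ A`, so `λ_B(x) ≤ λ_A(x)`, and the inequality follows.
-/

open Finset

/-- The set of all subset sums of a finset `S` (including the empty sum `0`). -/
def subsetSums {G : Type*} [AddCommGroup G] [DecidableEq G] (S : Finset G) : Finset G :=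
  S.powerset.image (fun T => T.sum id)

/-- `lam B x = |(B + x) \ B|`. -/
def lam {G : Type*} [AddCommGroup G] [DecidableEq G] (B : Finset G) (x : G) : ℕ :=
  ((B.image (· + x)) \ B).card

section

variable {G : Type*} [AddCommGroup G] [DecidableEq G]

theorem subsetSums_insert {S : Finset G} {x : G} (hx : x ∉ S) :
    subsetSums (insert x S) = subsetSums S ∪ (subsetSums S).image (· + x) := by
  rw [subsetSums, powerset_insert, image_union, image_image, subsetSums, image_image]
  congr 1
  refine image_congr fun T hT => ?_
  have hxT : x ∉ T := fun h => hx (mem_powerset.1 hT h)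
  simp only [Function.comp_apply, sum_insert hxT, id, add_comm]

theorem card_union_image_add (A : Finset G) (x : G) :
    (A ∪ A.image (· + x)).card = A.card + lam A x := by
  rw [lam, union_comm, ← card_sdiff_add_card, add_comm]

theorem lam_union_image_add_le (A : Finset G) (x : G) :
    lam (A ∪ A.image (· + x)) x ≤ lam A x := by
  have hinj : Function.Injective (· + x : G → G) := add_left_injective x
  calc lam (A ∪ A.image (· + x)) x
      ≤ ((A.image (· + x)).image (· + x) \ A.image (· + x)).card := by
        rw [lam, image_union]
        refine card_le_card fun y => ?_
        simp only [mem_sdiff, mem_union]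
        tauto
    _ = lam A x := by rw [lam, ← image_sdiff _ _ hinj, card_image_of_injective _ hinj]

end

theorem stmt_13_general {G : Type*} [AddCommGroup G] [DecidableEq G] (S : Finset G)
    (x : G) (hx : x ∈ S) :
    (subsetSums (S \ {x})).card + lam (subsetSums S) x ≤ (subsetSums S).card := by
  have hS : subsetSums S = subsetSums (S \ {x}) ∪ (subsetSums (S \ {x})).image (· + x) := by
    rw [← subsetSums_insert (by simp), insert_sdiff_self_of_mem hx]
  rw [hS, card_union_image_add]
  exact Nat.add_le_add_left (lam_union_image_add_le _ x) _

theorem stmt_13 {G : Type*} [AddCommGroup G] [Fintype G] [DecidableEq G] (S : Finset G)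
    (x : G) (hx : x ∈ S) :
    (subsetSums (S \ {x})).card + lam (subsetSums S) x ≤ (subsetSums S).card :=
  stmt_13_general S x hx
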